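/- Let α, β : ℕ → ℕ be non-increasing eventually-zero sequences and h ≥ 0 an integer such that Σ_{i=1}^j β_i ≤ Σ_{i=1}^j (α_i + h) for all j ≥ 1, and suppose h = 0. Then for every j, β₁ + ⋯ + β_j ≤ α₁ + ⋯ + α_j, and consequently if additionally Σ_{i≥1} α_i = Σ_{i≥1} β_i and Σ_{i≥1} α_i² = Σ_{i≥1} β_i², then α = β. -/

import Mathlib

/-!
Shift indices so that `a i = α (i + 1)`, `b i = β (i + 1)`. Then
`∑ a² = ∑ (a - b)² + ∑ b² + 2 ∑ (a - b) b`, and the cross term is nonnegative by Abel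
summation: the partial sums of `a - b` are nonnegative (weak majorization with `h = 0`)
and `b` is non-increasing and nonnegative. So equal sums of squares force `∑ (a - b)² = 0`.
-/

open Finset

theorem Finset.sum_Icc_one_eq_sum_range {M : Type*} [AddCommMonoid M] (f : ℕ → M) (n : ℕ) :
    ∑ i ∈ Icc 1 n, f i = ∑ i ∈ range n, f (i + 1) := by
  induction n with
  | zero => simp
  | succ n ih => rw [sum_Icc_succ_top (by omega), ih, sum_range_succ]

theorem finsum_eq_sum_range_of_eq_zero {M : Type*} [AddCommMonoid M] {f : ℕ → M} {N : ℕ}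
    (hf : ∀ i, N ≤ i → f i = 0) : ∑ᶠ i, f i = ∑ i ∈ range N, f i :=
  finsum_eq_sum_of_support_subset f fun i hi => by
    simpa using not_le.mp (mt (hf i) hi)

section WeakMajorization

variable {R : Type*} [CommRing R] [LinearOrder R] [IsStrictOrderedRing R] {a b f g : ℕ → R}

/-- Abel's inequality, with the boundary term kept so that it goes through by induction. -/
theorem sum_range_mul_le_sum_range_mul_of_antitone
    (hf : ∀ j, 0 ≤ ∑ i ∈ range j, f i) (hg : Antitone g) (n : ℕ) :
    (∑ i ∈ range n, f i) * g n ≤ ∑ i ∈ range n, f i * g i := by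
  induction n with
  | zero => simp
  | succ n ih =>
    calc (∑ i ∈ range (n + 1), f i) * g (n + 1)
        ≤ (∑ i ∈ range (n + 1), f i) * g n :=
          mul_le_mul_of_nonneg_left (hg n.le_succ) (hf _)
      _ = (∑ i ∈ range n, f i) * g n + f n * g n := by rw [sum_range_succ, add_mul]
      _ ≤ ∑ i ∈ range (n + 1), f i * g i := by rw [sum_range_succ]; gcongr

theorem sum_range_mul_nonneg_of_antitone
    (hf : ∀ j, 0 ≤ ∑ i ∈ range j, f i) (hg : Antitone g) (hg0 : ∀ i, 0 ≤ g i) (n : ℕ) :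
    0 ≤ ∑ i ∈ range n, f i * g i :=
  (mul_nonneg (hf n) (hg0 n)).trans (sum_range_mul_le_sum_range_mul_of_antitone hf hg n)

theorem sum_range_sq_sub_add_sum_range_sq_le
    (hmaj : ∀ j, ∑ i ∈ range j, b i ≤ ∑ i ∈ range j, a i) (hb : Antitone b) (hb0 : ∀ i, 0 ≤ b i)
    (n : ℕ) :
    ∑ i ∈ range n, (a i - b i) ^ 2 + ∑ i ∈ range n, b i ^ 2 ≤ ∑ i ∈ range n, a i ^ 2 := by
  have hcross : 0 ≤ ∑ i ∈ range n, (a i - b i) * b i :=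
    sum_range_mul_nonneg_of_antitone (fun j => by simpa [sum_sub_distrib] using hmaj j) hb hb0 n
  have hsplit : ∑ i ∈ range n, a i ^ 2 = ∑ i ∈ range n, (a i - b i) ^ 2
      + ∑ i ∈ range n, b i ^ 2 + 2 * ∑ i ∈ range n, (a i - b i) * b i := by
    simp only [mul_sum, ← sum_add_distrib]
    exact sum_congr rfl fun i _ => by ring
  linarith

theorem eq_of_sum_range_sq_eq_of_weakMajorization
    (hmaj : ∀ j, ∑ i ∈ range j, b i ≤ ∑ i ∈ range j, a i) (hb : Antitone b) (hb0 : ∀ i, 0 ≤ b i)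
    {n : ℕ} (hsq : ∑ i ∈ range n, a i ^ 2 = ∑ i ∈ range n, b i ^ 2) {i : ℕ} (hi : i < n) :
    a i = b i := by
  have hzero : ∑ i ∈ range n, (a i - b i) ^ 2 = 0 :=
    le_antisymm (by linarith [sum_range_sq_sub_add_sum_range_sq_le hmaj hb hb0 n])
      (sum_nonneg fun i _ => sq_nonneg _)
  have := (sum_eq_zero_iff_of_nonneg fun i _ => sq_nonneg (a i - b i)).mp hzero i (mem_range.mpr hi)
  exact sub_eq_zero.mp (pow_eq_zero_iff two_ne_zero |>.mp this)

end WeakMajorization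

theorem stmt_16_general (α β : ℕ → ℕ) (h : ℕ)
    (hβmono : ∀ i, 1 ≤ i → β (i + 1) ≤ β i)
    (hα0 : ∃ N, ∀ i, N ≤ i → α i = 0)
    (hβ0 : ∃ N, ∀ i, N ≤ i → β i = 0)
    (hmaj : ∀ j, 1 ≤ j →
      ∑ i ∈ Finset.Icc 1 j, β i ≤ ∑ i ∈ Finset.Icc 1 j, (α i + h))
    (hh : h = 0) :
    (∀ j, 1 ≤ j →
      ∑ i ∈ Finset.Icc 1 j, β i ≤ ∑ i ∈ Finset.Icc 1 j, α i) ∧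
    ((∑ᶠ i : ℕ, α (i + 1)) = (∑ᶠ i : ℕ, β (i + 1)) →
      (∑ᶠ i : ℕ, (α (i + 1)) ^ 2) = (∑ᶠ i : ℕ, (β (i + 1)) ^ 2) →
      ∀ i, 1 ≤ i → α i = β i) := by
  subst hh
  have hmaj₀ : ∀ j, 1 ≤ j → ∑ i ∈ Icc 1 j, β i ≤ ∑ i ∈ Icc 1 j, α i := by simpa using hmaj
  refine ⟨hmaj₀, fun _ hsq i hi => ?_⟩
  obtain ⟨Nα, hNα⟩ := hα0
  obtain ⟨Nβ, hNβ⟩ := hβ0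
  have hmajℤ : ∀ j, ∑ i ∈ range j, (β (i + 1) : ℤ) ≤ ∑ i ∈ range j, (α (i + 1) : ℤ) := by
    rintro (_ | j)
    · simp
    · have := hmaj₀ (j + 1) j.succ_pos
      rw [sum_Icc_one_eq_sum_range, sum_Icc_one_eq_sum_range] at this
      exact_mod_cast this
  have hβanti : Antitone fun i => (β (i + 1) : ℤ) :=
    antitone_nat_of_succ_le fun i => by exact_mod_cast hβmono (i + 1) i.succ_pos
  obtain ⟨k, rfl⟩ := Nat.exists_eq_add_of_le' hi
  set n := Nα + Nβ + k + 1
  have hsqℤ : ∑ i ∈ range n, (α (i + 1) : ℤ) ^ 2 = ∑ i ∈ range n, (β (i + 1) : ℤ) ^ 2 := by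
    rw [finsum_eq_sum_range_of_eq_zero (N := n) (fun i hi => by simp [hNα (i + 1) (by omega)]),
      finsum_eq_sum_range_of_eq_zero (N := n) (fun i hi => by simp [hNβ (i + 1) (by omega)])] at hsq
    exact_mod_cast hsq
  exact_mod_cast eq_of_sum_range_sq_eq_of_weakMajorization hmajℤ hβanti
    (fun _ => Nat.cast_nonneg _) hsqℤ (show k < n by omega)

/-- Weak majorization with shift h specialized to h = 0: the partial-sum
inequalities hold without shift, and equal sums together with equal sums of
squares force the sequences to coincide. -/
theorem stmt_16 (α β : ℕ → ℕ) (h : ℕ)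
    (hαmono : ∀ i, 1 ≤ i → α (i + 1) ≤ α i)
    (hβmono : ∀ i, 1 ≤ i → β (i + 1) ≤ β i)
    (hα0 : ∃ N, ∀ i, N ≤ i → α i = 0)
    (hβ0 : ∃ N, ∀ i, N ≤ i → β i = 0)
    (hmaj : ∀ j, 1 ≤ j →
      ∑ i ∈ Finset.Icc 1 j, β i ≤ ∑ i ∈ Finset.Icc 1 j, (α i + h))
    (hh : h = 0) :
    (∀ j, 1 ≤ j →
      ∑ i ∈ Finset.Icc 1 j, β i ≤ ∑ i ∈ Finset.Icc 1 j, α i) ∧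
    ((∑ᶠ i : ℕ, α (i + 1)) = (∑ᶠ i : ℕ, β (i + 1)) →
      (∑ᶠ i : ℕ, (α (i + 1)) ^ 2) = (∑ᶠ i : ℕ, (β (i + 1)) ^ 2) →
      ∀ i, 1 ≤ i → α i = β i) :=
  stmt_16_general α β h hβmono hα0 hβ0 hmaj hh
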